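/- arXiv:0711.3568 — 2 statements merged into one kernel-verified Lean document; each statement's English description precedes it below -/
import Mathlib

section
/- For all integers d ≥ 2 and c with gcd(d-1, c) = 1, the quotient additive group (ℤ × ℤ) / range(f_{d,c}) is isomorphic to the cyclic group ℤ/(d-1)² (i.e., to ZMod ((d-1)^2)). -/
/-- The additive (ℤ-linear) map `f_{d,c} : ℤ × ℤ → ℤ × ℤ`,
`f_{d,c}(z, z') = ((1-d)·z, -c·z + (1-d)·z')`. -/
def fdc (d c : ℤ) : (ℤ × ℤ) →ₗ[ℤ] (ℤ × ℤ) where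
  toFun p := ((1 - d) * p.1, -c * p.1 + (1 - d) * p.2)
  map_add' p q := by ext <;> simp <;> ring
  map_smul' m p := by ext <;> simp <;> ring

/-- The auxiliary linear map `(x, y) ↦ c·x + (1-d)·y mod (d-1)²`. -/
def psi (d c : ℤ) : (ℤ × ℤ) →ₗ[ℤ] ZMod ((d - 1).toNat ^ 2) where
  toFun p := ((c * p.1 + (1 - d) * p.2 : ℤ) : ZMod ((d - 1).toNat ^ 2))
  map_add' p q := by
    simp only [Prod.fst_add, Prod.snd_add]; push_cast; ring
  map_smul' m p := by
    simp only [Prod.smul_fst, Prod.smul_snd, smul_eq_mul, RingHom.id_apply, zsmul_eq_mul,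
      Prod.fst_mul, Prod.snd_mul, Prod.fst_intCast, Prod.snd_intCast, Int.cast_id]
    push_cast; ring

/-- For all integers d ≥ 2 and c with gcd(d-1, c) = 1, the quotient additive group
(ℤ × ℤ) / range(f_{d,c}) is isomorphic to the cyclic group ℤ/(d-1)². -/
theorem stmt_1 (d c : ℤ) (hd : 2 ≤ d) (hgcd : Int.gcd (d - 1) c = 1) :
    Nonempty (((ℤ × ℤ) ⧸ LinearMap.range (fdc d c)) ≃+ ZMod ((d - 1).toNat ^ 2)) := by
  have ha : ((d - 1).toNat : ℤ) = d - 1 := Int.toNat_of_nonneg (by omega)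
  have hane : d - 1 ≠ 0 := by omega
  have hcop : IsCoprime (d - 1) c := Int.isCoprime_iff_gcd_eq_one.mpr hgcd
  have hker : LinearMap.range (fdc d c) = LinearMap.ker (psi d c) := by
    ext ⟨x, y⟩
    simp only [LinearMap.mem_range, LinearMap.mem_ker, psi, fdc,
      LinearMap.coe_mk, AddHom.coe_mk, Prod.mk.injEq, Prod.exists]
    rw [ZMod.intCast_zmod_eq_zero_iff_dvd]
    push_cast [ha]
    constructor
    · rintro ⟨s, t, hx, hy⟩
      refine ⟨t, ?_⟩
      rw [← hx, ← hy]; ring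
    · rintro ⟨k, hk⟩
      have hdx : (d - 1) ∣ c * x := ⟨(d - 1) * k + y, by linear_combination hk⟩
      obtain ⟨s, hs⟩ := hcop.dvd_of_dvd_mul_left hdx
      have hy : y = c * s - (d - 1) * k := by
        have h2 : (d - 1) * (c * s - y) = (d - 1) * ((d - 1) * k) := by
          linear_combination hk - c * hs
        have := mul_left_cancel₀ hane h2
        linarith
      exact ⟨-s, k, by rw [hs]; ring, by rw [hy]; ring⟩
  have hsurj : Function.Surjective (psi d c) := by
    intro z
    obtain ⟨u, v, huv⟩ := hcop
    refine ⟨(z.val : ℤ) • (v, -u), ?_⟩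
    simp only [psi, LinearMap.coe_mk, AddHom.coe_mk, Prod.smul_fst, Prod.smul_snd,
      smul_eq_mul]
    have h1 : c * ((z.val : ℤ) * v) + (1 - d) * ((z.val : ℤ) * -u) = (z.val : ℤ) := by
      have : c * ((z.val : ℤ) * v) + (1 - d) * ((z.val : ℤ) * -u)
          = (z.val : ℤ) * (u * (d - 1) + v * c) := by ring
      rw [this, huv, mul_one]
    rw [h1]
    have : NeZero ((d - 1).toNat ^ 2) := ⟨pow_ne_zero 2 (by omega)⟩
    rw [Int.cast_natCast, ZMod.natCast_val, ZMod.cast_id]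
  refine ⟨?_⟩
  exact ((Submodule.quotEquivOfEq _ _ hker).trans
    ((psi d c).quotKerEquivOfSurjective hsurj)).toAddEquiv
end

section
/- For all integers d ≥ 3 and c with gcd(d-1, c) = 1, the quotient additive group (ℤ × ℤ) / range(f_{d,c}) is not isomorphic to the quotient additive group (ℤ × ℤ) / range(f_{d,0}). -/
@[simp]
theorem fdc_apply (d c : ℤ) (p : ℤ × ℤ) :
    fdc d c p = ((1 - d) * p.1, -c * p.1 + (1 - d) * p.2) :=
  rfl

theorem sub_one_smul_eq_zero_of_fdc_zero (d : ℤ) (y : (ℤ × ℤ) ⧸ LinearMap.range (fdc d 0)) :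
    (d - 1) • y = 0 := by
  obtain ⟨p, rfl⟩ := Submodule.Quotient.mk_surjective _ y
  rw [← Submodule.Quotient.mk_smul, Submodule.Quotient.mk_eq_zero]
  exact ⟨-p, by ext <;> simp <;> ring⟩

theorem sub_one_dvd_of_sub_one_smul_mk_eq_zero {d c : ℤ} (hd : d ≠ 1)
    (h : (d - 1) • (Submodule.Quotient.mk (1, 0) : (ℤ × ℤ) ⧸ LinearMap.range (fdc d c)) = 0) :
    d - 1 ∣ c := by
  rw [← Submodule.Quotient.mk_smul, Submodule.Quotient.mk_eq_zero] at h
  obtain ⟨⟨z, z'⟩, hz⟩ := h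
  have h₁ : (1 - d) * z = d - 1 := by simpa using congrArg Prod.fst hz
  have h₂ : -c * z + (1 - d) * z' = 0 := by simpa using congrArg Prod.snd hz
  have hz₁ : z = -1 :=
    mul_left_cancel₀ (sub_ne_zero.mpr (Ne.symm hd)) (by linarith)
  exact ⟨z', by subst hz₁; linarith⟩

/-- For all integers d ≥ 3 and c with gcd(d-1, c) = 1, the quotient additive group
(ℤ × ℤ) / range(f_{d,c}) is not isomorphic to (ℤ × ℤ) / range(f_{d,0}). -/
theorem stmt_5 (d c : ℤ) (hd : 3 ≤ d) (hgcd : Int.gcd (d - 1) c = 1) :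
    ¬ Nonempty (((ℤ × ℤ) ⧸ LinearMap.range (fdc d c)) ≃+
      ((ℤ × ℤ) ⧸ LinearMap.range (fdc d 0))) := by
  rintro ⟨e⟩
  have hdvd : d - 1 ∣ c := sub_one_dvd_of_sub_one_smul_mk_eq_zero (by omega) <|
    e.injective <| by rw [map_zsmul, map_zero, sub_one_smul_eq_zero_of_fdc_zero]
  have : (d - 1).natAbs = 1 := hgcd ▸ (Int.gcd_eq_natAbs_left hdvd).symm
  omega
end
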